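/- For the curve in ℝ² parametrized in polar form by γ(θ) = (2r(θ)cos θ, 2r(θ)sin θ) with r(θ) = (a / cos(4θ))^{1/4} for a > 0 and |θ| < π/8, the signed curvature is k(θ) = −(3/2)·a^{−1/4}·(cos 4θ)^{5/4}. -/

import Mathlib

open Real

/-- First coordinate of `γ(θ) = (2r(θ)cos θ, 2r(θ)sin θ)`, `r(θ) = (a/cos 4θ)^{1/4}`. -/
noncomputable def gammaX (a : ℝ) : ℝ → ℝ :=
  fun t => 2 * (a / Real.cos (4 * t)) ^ ((1 : ℝ) / 4) * Real.cos t

/-- Second coordinate of `γ`. -/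
noncomputable def gammaY (a : ℝ) : ℝ → ℝ :=
  fun t => 2 * (a / Real.cos (4 * t)) ^ ((1 : ℝ) / 4) * Real.sin t

/-- The polar radius `r(t) = (a / cos 4t)^{1/4}`. -/
noncomputable def rr (a : ℝ) : ℝ → ℝ := fun t => (a / Real.cos (4 * t)) ^ ((1 : ℝ) / 4)

/-- `r'`. -/
noncomputable def rr1 (a : ℝ) : ℝ → ℝ :=
  fun t => rr a t * (Real.sin (4 * t) / Real.cos (4 * t))

/-- `r''`. -/
noncomputable def rr2 (a : ℝ) : ℝ → ℝ :=
  fun t => rr a t * ((Real.sin (4 * t) ^ 2 + 4) / Real.cos (4 * t) ^ 2)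

/-- `X'`. -/
noncomputable def gX1 (a : ℝ) : ℝ → ℝ :=
  fun t => 2 * (rr1 a t * Real.cos t - rr a t * Real.sin t)

/-- `Y'`. -/
noncomputable def gY1 (a : ℝ) : ℝ → ℝ :=
  fun t => 2 * (rr1 a t * Real.sin t + rr a t * Real.cos t)

lemma hasDerivAt_cos4 (t : ℝ) :
    HasDerivAt (fun t => Real.cos (4 * t)) (-Real.sin (4 * t) * 4) t := by
  have h := (Real.hasDerivAt_cos (4 * t)).comp t ((hasDerivAt_id t).const_mul 4)
  simpa [Function.comp_def] using h

lemma hasDerivAt_sin4 (t : ℝ) :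
    HasDerivAt (fun t => Real.sin (4 * t)) (Real.cos (4 * t) * 4) t := by
  have h := (Real.hasDerivAt_sin (4 * t)).comp t ((hasDerivAt_id t).const_mul 4)
  simpa [Function.comp_def] using h

lemma hasDerivAt_rr (a t : ℝ) (ha : 0 < a) (hc : 0 < Real.cos (4 * t)) :
    HasDerivAt (rr a) (rr1 a t) t := by
  have hu : HasDerivAt (fun t => a / Real.cos (4 * t))
      ((0 * Real.cos (4 * t) - a * (-Real.sin (4 * t) * 4)) / Real.cos (4 * t) ^ 2) t :=
    (hasDerivAt_const t a).div (hasDerivAt_cos4 t) hc.ne'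
  have hpos : (0:ℝ) < a / Real.cos (4 * t) := div_pos ha hc
  have h := hu.rpow_const (p := (1:ℝ)/4) (Or.inl hpos.ne')
  convert h using 1
  · rfl
  have hexp : (a / Real.cos (4 * t)) ^ ((1:ℝ)/4 - 1)
      = (a / Real.cos (4 * t)) ^ ((1:ℝ)/4) * (a / Real.cos (4 * t))⁻¹ := by
    rw [show (1:ℝ)/4 - 1 = (1:ℝ)/4 + (-1) by norm_num, Real.rpow_add hpos,
      Real.rpow_neg_one]
  rw [hexp]
  simp only [rr1, rr]
  field_simp
  ring

lemma hasDerivAt_rr1 (a t : ℝ) (ha : 0 < a) (hc : 0 < Real.cos (4 * t)) :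
    HasDerivAt (rr1 a) (rr2 a t) t := by
  have hq : HasDerivAt (fun t => Real.sin (4 * t) / Real.cos (4 * t))
      ((Real.cos (4 * t) * 4 * Real.cos (4 * t)
        - Real.sin (4 * t) * (-Real.sin (4 * t) * 4)) / Real.cos (4 * t) ^ 2) t :=
    (hasDerivAt_sin4 t).div (hasDerivAt_cos4 t) hc.ne'
  have h := (hasDerivAt_rr a t ha hc).mul hq
  convert h using 1
  · rfl
  · rfl
  · rfl
  simp only [rr2, rr1]
  rw [show Real.cos (4*t) * 4 * Real.cos (4*t) - Real.sin (4*t) * (-Real.sin (4*t) * 4)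
      = 4 * (Real.sin (4*t)^2 + Real.cos (4*t)^2) by ring, Real.sin_sq_add_cos_sq]
  field_simp

lemma hasDerivAt_gX (a t : ℝ) (ha : 0 < a) (hc : 0 < Real.cos (4 * t)) :
    HasDerivAt (gammaX a) (gX1 a t) t := by
  have h := (((hasDerivAt_rr a t ha hc).const_mul 2).mul (Real.hasDerivAt_cos t))
  have he : gammaX a = fun t => 2 * rr a t * Real.cos t := rfl
  rw [he]
  convert h using 1
  · rfl
  · rfl
  · rfl
  simp only [gX1]; ring

lemma hasDerivAt_gY (a t : ℝ) (ha : 0 < a) (hc : 0 < Real.cos (4 * t)) :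
    HasDerivAt (gammaY a) (gY1 a t) t := by
  have h := (((hasDerivAt_rr a t ha hc).const_mul 2).mul (Real.hasDerivAt_sin t))
  have he : gammaY a = fun t => 2 * rr a t * Real.sin t := rfl
  rw [he]
  convert h using 1
  · rfl
  · rfl
  · rfl
  simp only [gY1]; ring

lemma hasDerivAt_gX1 (a t : ℝ) (ha : 0 < a) (hc : 0 < Real.cos (4 * t)) :
    HasDerivAt (gX1 a)
      (2 * (rr2 a t * Real.cos t - 2 * rr1 a t * Real.sin t - rr a t * Real.cos t)) t := by
  have h := ((((hasDerivAt_rr1 a t ha hc).mul (Real.hasDerivAt_cos t)).sub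
    ((hasDerivAt_rr a t ha hc).mul (Real.hasDerivAt_sin t))).const_mul 2)
  convert h using 1
  · rfl
  · rfl
  · rfl
  ring

lemma hasDerivAt_gY1 (a t : ℝ) (ha : 0 < a) (hc : 0 < Real.cos (4 * t)) :
    HasDerivAt (gY1 a)
      (2 * (rr2 a t * Real.sin t + 2 * rr1 a t * Real.cos t - rr a t * Real.sin t)) t := by
  have h := ((((hasDerivAt_rr1 a t ha hc).mul (Real.hasDerivAt_sin t)).add
    ((hasDerivAt_rr a t ha hc).mul (Real.hasDerivAt_cos t))).const_mul 2)
  convert h using 1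
  · rfl
  · rfl
  · rfl
  ring

lemma aux_den (R c s S C : ℝ) (hc : 0 < c)
    (hpy : s ^ 2 + c ^ 2 = 1) (hpy2 : S ^ 2 + C ^ 2 = 1) :
    (2 * (R * (s / c) * C - R * S)) ^ 2
      + (2 * (R * (s / c) * S + R * C)) ^ 2 = (2 * R / c) ^ 2 := by
  field_simp
  linear_combination (R^2*(S^2 + C^2)) * hpy + (R^2) * hpy2

lemma aux_num (R c s S C : ℝ) (hc : 0 < c)
    (hpy : s ^ 2 + c ^ 2 = 1) (hpy2 : S ^ 2 + C ^ 2 = 1) :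
    (2 * (R * (s / c) * C - R * S)) *
      (2 * (R * ((s ^ 2 + 4) / c ^ 2) * S + 2 * (R * (s / c)) * C - R * S))
      - (2 * (R * (s / c) * S + R * C)) *
      (2 * (R * ((s ^ 2 + 4) / c ^ 2) * C - 2 * (R * (s / c)) * S - R * C))
      = -12 * R ^ 2 / c ^ 2 := by
  field_simp
  linear_combination (4*R^2*c*(S^2+C^2)) * hpy - (12*R^2*c) * hpy2

lemma aux_div (R c : ℝ) (hc : 0 < c) (hR : 0 < R) :
    -12 * R ^ 2 / c ^ 2 / (2 * R / c) ^ 3 = -(3/2) * (c / R) := by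
  field_simp
  ring

/-- the signed curvature `(X'Y'' − Y'X'')/((X'² + Y'²)^{3/2})` of the
curve `γ(θ) = (2r(θ)cos θ, 2r(θ)sin θ)`, `r(θ) = (a/cos 4θ)^{1/4}`, `a > 0`,
`|θ| < π/8`, equals `−(3/2)·a^{−1/4}·(cos 4θ)^{5/4}`. -/
theorem curvature_of_polar_curve (a θ : ℝ) (ha : 0 < a) (hθ : |θ| < π / 8) :
    (deriv (gammaX a) θ * deriv (deriv (gammaY a)) θ
        - deriv (gammaY a) θ * deriv (deriv (gammaX a)) θ) /
      ((deriv (gammaX a) θ ^ 2 + deriv (gammaY a) θ ^ 2) ^ ((3 : ℝ) / 2))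
    = -(3 / 2) * a ^ (-(1 : ℝ) / 4) * (Real.cos (4 * θ)) ^ ((5 : ℝ) / 4) := by
  have hπ : (0:ℝ) < π := Real.pi_pos
  have habs := abs_lt.mp hθ
  have hc : 0 < Real.cos (4 * θ) := by
    apply Real.cos_pos_of_mem_Ioo
    constructor <;> [nlinarith [habs.1]; nlinarith [habs.2]]
  have hca : ContinuousAt (fun t => Real.cos (4 * t)) θ := by fun_prop
  have hev : ∀ᶠ t in nhds θ, 0 < Real.cos (4 * t) :=
    hca.eventually (eventually_gt_nhds hc)
  have hdX : deriv (gammaX a) θ = gX1 a θ := (hasDerivAt_gX a θ ha hc).deriv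
  have hdY : deriv (gammaY a) θ = gY1 a θ := (hasDerivAt_gY a θ ha hc).deriv
  have heX : deriv (gammaX a) =ᶠ[nhds θ] gX1 a :=
    hev.mono fun t ht => (hasDerivAt_gX a t ha ht).deriv
  have heY : deriv (gammaY a) =ᶠ[nhds θ] gY1 a :=
    hev.mono fun t ht => (hasDerivAt_gY a t ha ht).deriv
  have hdX2 : deriv (deriv (gammaX a)) θ
      = 2 * (rr2 a θ * Real.cos θ - 2 * rr1 a θ * Real.sin θ - rr a θ * Real.cos θ) := by
    rw [heX.deriv_eq]; exact (hasDerivAt_gX1 a θ ha hc).deriv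
  have hdY2 : deriv (deriv (gammaY a)) θ
      = 2 * (rr2 a θ * Real.sin θ + 2 * rr1 a θ * Real.cos θ - rr a θ * Real.sin θ) := by
    rw [heY.deriv_eq]; exact (hasDerivAt_gY1 a θ ha hc).deriv
  rw [hdX, hdY, hdX2, hdY2]
  have hpy : Real.sin (4 * θ) ^ 2 + Real.cos (4 * θ) ^ 2 = 1 := Real.sin_sq_add_cos_sq (4 * θ)
  have hpy2 : Real.sin θ ^ 2 + Real.cos θ ^ 2 = 1 := Real.sin_sq_add_cos_sq θ
  have hRpos : 0 < rr a θ := Real.rpow_pos_of_pos (div_pos ha hc) _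
  have hR1 : rr1 a θ = rr a θ * (Real.sin (4 * θ) / Real.cos (4 * θ)) := rfl
  have hR2 : rr2 a θ = rr a θ * ((Real.sin (4 * θ) ^ 2 + 4) / Real.cos (4 * θ) ^ 2) := rfl
  simp only [gX1, gY1, hR1, hR2]
  rw [aux_den (rr a θ) (Real.cos (4*θ)) (Real.sin (4*θ)) (Real.sin θ) (Real.cos θ)
      hc hpy hpy2,
    aux_num (rr a θ) (Real.cos (4*θ)) (Real.sin (4*θ)) (Real.sin θ) (Real.cos θ)
      hc hpy hpy2]
  have h2Rc : 0 < 2 * rr a θ / Real.cos (4*θ) := by positivity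
  have hpow : ((2 * rr a θ / Real.cos (4*θ)) ^ 2 : ℝ) ^ ((3:ℝ)/2)
      = (2 * rr a θ / Real.cos (4*θ)) ^ 3 := by
    rw [← Real.rpow_natCast (2 * rr a θ / Real.cos (4*θ)) 2, ← Real.rpow_mul h2Rc.le,
      ← Real.rpow_natCast (2 * rr a θ / Real.cos (4*θ)) 3]
    norm_num
  rw [hpow, aux_div (rr a θ) (Real.cos (4*θ)) hc hRpos]
  have hcR : Real.cos (4*θ) / rr a θ
      = a ^ (-(1:ℝ)/4) * (Real.cos (4*θ)) ^ ((5:ℝ)/4) := by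
    have hrw : rr a θ = a ^ ((1:ℝ)/4) / (Real.cos (4*θ)) ^ ((1:ℝ)/4) := by
      simp only [rr]
      rw [Real.div_rpow ha.le hc.le]
    rw [hrw, div_div_eq_mul_div, show (-1:ℝ)/4 = -((1:ℝ)/4) by norm_num, Real.rpow_neg ha.le,
      show ((5:ℝ)/4) = 1 + (1:ℝ)/4 by norm_num, Real.rpow_add hc, Real.rpow_one]
    have hap : (0:ℝ) < a ^ ((1:ℝ)/4) := Real.rpow_pos_of_pos ha _
    field_simp
  rw [hcR]
  ring
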